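/- Let P > 0 and write s_{:,i} = (s_{1,i},…,s_{N_r,i}) ∈ ℂ^{N_r}. Suppose W* ∈ ℂ^{N_t×N_r} is an optimal solution of the block-level PM slot-invariant problem (minimize ∑_{i=1}^{N_s} ‖W s_{:,i}‖² over W ∈ ℂ^{N_t×N_r} subject to CI_i(W s_{:,i}, 1) for all i), and let P^{PM} := ∑_{i=1}^{N_s} ‖W* s_{:,i}‖² with P^{PM} > 0. Then the pair (√(P/P^{PM})·W*, √(P/P^{PM})) is an optimal solution of the block-level SB slot-invariant problem: it satisfies CI_i(√(P/P^{PM})·W* s_{:,i}, √(P/P^{PM})) for all i and ∑_i ‖√(P/P^{PM})·W* s_{:,i}‖² ≤ P, and every pair (W, t) with CI_i(W s_{:,i}, t) for all i and ∑_i ‖W s_{:,i}‖² ≤ P satisfies t ≤ √(P/P^{PM}). -/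

import Mathlib

/-!
Both problems are invariant under positive rescaling: `W ↦ c • W` turns a solution of the CI
constraints at level `t` into one at level `c * t` and multiplies the total power by `c ^ 2`.
Scaling the PM optimum by `√(P/P^{PM})` therefore spends exactly the budget `P`; conversely a
feasible SB pair `(W, t)` with `t > 0` gives the PM-feasible `t⁻¹ • W`, whose power
`t⁻² ∑ ‖W s_{:,i}‖² ≤ t⁻² P` is at least `P^{PM}`, i.e. `t ≤ √(P/P^{PM})`.
-/

open scoped BigOperators

/-- The constructive-interference (CI) constraint in a given symbol slot:
`CI Nt Nr M h s γ σ x t` holds iff for every user `k`,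
`Re((h_kᵀ x)/s_k) − |Im((h_kᵀ x)/s_k)| / tan(π/M) ≥ t·√(γ_k)·σ`. -/
noncomputable def CI (Nt Nr M : ℕ) (h : Fin Nr → Fin Nt → ℂ)
    (s : Fin Nr → ℂ) (γ : Fin Nr → ℝ) (σ : ℝ)
    (x : Fin Nt → ℂ) (t : ℝ) : Prop :=
  ∀ k : Fin Nr,
    ((∑ j, h k j * x j) / s k).re -
        |((∑ j, h k j * x j) / s k).im| / Real.tan (Real.pi / M) ≥
      t * Real.sqrt (γ k) * σ

open scoped Matrix

theorem CI.smul {Nt Nr M : ℕ} {h : Fin Nr → Fin Nt → ℂ} {s : Fin Nr → ℂ} {γ : Fin Nr → ℝ}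
    {σ : ℝ} {x : Fin Nt → ℂ} {t c : ℝ} (H : CI Nt Nr M h s γ σ x t) (hc : 0 ≤ c) :
    CI Nt Nr M h s γ σ (c • x) (c * t) := by
  intro k
  have hsum : (∑ j, h k j * (c • x) j) / s k = c • ((∑ j, h k j * x j) / s k) := by
    simp only [Pi.smul_apply, mul_smul_comm, ← Finset.smul_sum, smul_div_assoc]
  rw [hsum, Complex.smul_re, Complex.smul_im, smul_eq_mul, smul_eq_mul, abs_mul,
    abs_of_nonneg hc]
  calc c * t * √(γ k) * σ = c * (t * √(γ k) * σ) := by ring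
    _ ≤ c * (((∑ j, h k j * x j) / s k).re
          - |((∑ j, h k j * x j) / s k).im| / Real.tan (Real.pi / M)) :=
        mul_le_mul_of_nonneg_left (H k) hc
    _ = _ := by ring

section SlotInvariant

variable {Nt Nr Ns : ℕ}

def BlockCI (M : ℕ) (h : Fin Nr → Fin Nt → ℂ) (s : Fin Nr → Fin Ns → ℂ)
    (γ : Fin Nr → Fin Ns → ℝ) (σ : ℝ) (W : Matrix (Fin Nt) (Fin Nr) ℂ) (t : ℝ) : Prop :=
  ∀ i, CI Nt Nr M h (fun k => s k i) (fun k => γ k i) σ (W *ᵥ fun k => s k i) t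

noncomputable def blockPower (s : Fin Nr → Fin Ns → ℂ) (W : Matrix (Fin Nt) (Fin Nr) ℂ) : ℝ :=
  ∑ i, ∑ j, ‖(W *ᵥ fun k => s k i) j‖ ^ 2

theorem BlockCI.smul {M : ℕ} {h : Fin Nr → Fin Nt → ℂ} {s : Fin Nr → Fin Ns → ℂ}
    {γ : Fin Nr → Fin Ns → ℝ} {σ : ℝ} {W : Matrix (Fin Nt) (Fin Nr) ℂ} {t c : ℝ}
    (H : BlockCI M h s γ σ W t) (hc : 0 ≤ c) : BlockCI M h s γ σ (c • W) (c * t) := by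
  intro i
  rw [Matrix.smul_mulVec]
  exact (H i).smul hc

theorem blockPower_smul (s : Fin Nr → Fin Ns → ℂ) (W : Matrix (Fin Nt) (Fin Nr) ℂ) (c : ℝ) :
    blockPower s (c • W) = c ^ 2 * blockPower s W := by
  simp only [blockPower, Matrix.smul_mulVec, Pi.smul_apply, norm_smul, mul_pow,
    Real.norm_eq_abs, sq_abs, Finset.mul_sum]

end SlotInvariant

theorem le_sqrt_div_of_le_inv_sq_mul {t P Q : ℝ} (ht : 0 < t) (hQ : 0 < Q)
    (hQt : Q ≤ t⁻¹ ^ 2 * P) : t ≤ √(P / Q) := by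
  rw [Real.le_sqrt' ht, le_div_iff₀ hQ]
  calc t ^ 2 * Q ≤ t ^ 2 * (t⁻¹ ^ 2 * P) := by gcongr
    _ = P := by field_simp

theorem stmt13_general (Nt Nr Ns M : ℕ)
    (h : Fin Nr → Fin Nt → ℂ)
    (s : Fin Nr → Fin Ns → ℂ)
    (γ : Fin Nr → Fin Ns → ℝ)
    (σ : ℝ)
    (P : ℝ) (hP : 0 < P)
    (Wstar : Matrix (Fin Nt) (Fin Nr) ℂ)
    (hfeas : ∀ i, CI Nt Nr M h (fun k => s k i) (fun k => γ k i) σ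
      (Wstar.mulVec fun k => s k i) 1)
    (hopt : ∀ W : Matrix (Fin Nt) (Fin Nr) ℂ,
      (∀ i, CI Nt Nr M h (fun k => s k i) (fun k => γ k i) σ
        (W.mulVec fun k => s k i) 1) →
      ∑ i, ∑ j, ‖Wstar.mulVec (fun k => s k i) j‖ ^ 2 ≤
        ∑ i, ∑ j, ‖W.mulVec (fun k => s k i) j‖ ^ 2)
    (PPM : ℝ) (hPPM : PPM = ∑ i, ∑ j, ‖Wstar.mulVec (fun k => s k i) j‖ ^ 2)
    (hPPM0 : 0 < PPM) :
    (∀ i, CI Nt Nr M h (fun k => s k i) (fun k => γ k i) σ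
        ((Real.sqrt (P / PPM) • Wstar).mulVec fun k => s k i)
        (Real.sqrt (P / PPM))) ∧
    (∑ i, ∑ j, ‖(Real.sqrt (P / PPM) • Wstar).mulVec (fun k => s k i) j‖ ^ 2 ≤ P) ∧
    (∀ (W : Matrix (Fin Nt) (Fin Nr) ℂ) (t : ℝ),
      (∀ i, CI Nt Nr M h (fun k => s k i) (fun k => γ k i) σ
        (W.mulVec fun k => s k i) t) →
      (∑ i, ∑ j, ‖W.mulVec (fun k => s k i) j‖ ^ 2 ≤ P) →
      t ≤ Real.sqrt (P / PPM)) := by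
  have hPPM' : PPM = blockPower s Wstar := hPPM
  have hc : 0 ≤ √(P / PPM) := Real.sqrt_nonneg _
  refine ⟨?_, ?_, fun W t hW hWP => ?_⟩
  · have := (show BlockCI M h s γ σ Wstar 1 from hfeas).smul hc
    rwa [mul_one] at this
  · change blockPower s _ ≤ P
    rw [blockPower_smul, ← hPPM', Real.sq_sqrt (by positivity), div_mul_cancel₀ _ hPPM0.ne']
  · rcases le_or_gt t 0 with ht | ht
    · exact ht.trans hc
    refine le_sqrt_div_of_le_inv_sq_mul ht hPPM0 ?_
    have hfeas' : BlockCI M h s γ σ (t⁻¹ • W) 1 := by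
      have := (show BlockCI M h s γ σ W t from hW).smul (inv_nonneg.2 ht.le)
      rwa [inv_mul_cancel₀ ht.ne'] at this
    calc PPM ≤ blockPower s (t⁻¹ • W) := hPPM ▸ hopt _ hfeas'
      _ = t⁻¹ ^ 2 * blockPower s W := blockPower_smul s W t⁻¹
      _ ≤ t⁻¹ ^ 2 * P := by gcongr; exact hWP

/-- A block-level PM slot-invariant optimum `W*` with total power `P^{PM} > 0`
yields, after scaling by `√(P/P^{PM})`, a block-level SB slot-invariant optimum
for budget `P`. -/
theorem stmt13 (Nt Nr Ns M : ℕ) (hNt : 0 < Nt) (hNr : 0 < Nr) (hNs : 0 < Ns)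
    (hM : 3 ≤ M)
    (h : Fin Nr → Fin Nt → ℂ)
    (s : Fin Nr → Fin Ns → ℂ) (hs : ∀ k i, s k i ≠ 0)
    (γ : Fin Nr → Fin Ns → ℝ) (hγ : ∀ k i, 0 ≤ γ k i)
    (σ : ℝ) (hσ : 0 < σ)
    (P : ℝ) (hP : 0 < P)
    (Wstar : Matrix (Fin Nt) (Fin Nr) ℂ)
    (hfeas : ∀ i, CI Nt Nr M h (fun k => s k i) (fun k => γ k i) σ
      (Wstar.mulVec fun k => s k i) 1)
    (hopt : ∀ W : Matrix (Fin Nt) (Fin Nr) ℂ,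
      (∀ i, CI Nt Nr M h (fun k => s k i) (fun k => γ k i) σ
        (W.mulVec fun k => s k i) 1) →
      ∑ i, ∑ j, ‖Wstar.mulVec (fun k => s k i) j‖ ^ 2 ≤
        ∑ i, ∑ j, ‖W.mulVec (fun k => s k i) j‖ ^ 2)
    (PPM : ℝ) (hPPM : PPM = ∑ i, ∑ j, ‖Wstar.mulVec (fun k => s k i) j‖ ^ 2)
    (hPPM0 : 0 < PPM) :
    (∀ i, CI Nt Nr M h (fun k => s k i) (fun k => γ k i) σ
        ((Real.sqrt (P / PPM) • Wstar).mulVec fun k => s k i)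
        (Real.sqrt (P / PPM))) ∧
    (∑ i, ∑ j, ‖(Real.sqrt (P / PPM) • Wstar).mulVec (fun k => s k i) j‖ ^ 2 ≤ P) ∧
    (∀ (W : Matrix (Fin Nt) (Fin Nr) ℂ) (t : ℝ),
      (∀ i, CI Nt Nr M h (fun k => s k i) (fun k => γ k i) σ
        (W.mulVec fun k => s k i) t) →
      (∑ i, ∑ j, ‖W.mulVec (fun k => s k i) j‖ ^ 2 ≤ P) →
      t ≤ Real.sqrt (P / PPM)) :=
  stmt13_general Nt Nr Ns M h s γ σ P hP Wstar hfeas hopt PPM hPPM hPPM0
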